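/- Let V = ℝ^{2n+1} and let 𝔤 ⊆ 𝔤𝔩(2n+1,ℝ) be the Lie subalgebra of all matrices of block form diag(0, A, A) with A ∈ 𝔤𝔩(n,ℝ). Then the first prolongation 𝔤^{(1)} = (S²V* ⊗ V) ∩ (V* ⊗ 𝔤) is zero; i.e., if t : V → 𝔤𝔩(V) is a linear map with values in 𝔤 such that the associated bilinear map (v,w) ↦ t(v)(w) is symmetric, then t = 0. -/
import Mathlib

open Matrix

/-- The block diagonal matrix `diag(0, A, A)`. -/
noncomputable def bd0 (n : ℕ) (A : Matrix (Fin n) (Fin n) ℝ) :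
    Matrix (Fin 1 ⊕ (Fin n ⊕ Fin n)) (Fin 1 ⊕ (Fin n ⊕ Fin n)) ℝ :=
  Matrix.fromBlocks 0 0 0 (Matrix.fromBlocks A 0 0 A)

/-- The first prolongation of the Lie algebra `𝔤 = {diag(0,A,A)}` vanishes:
if `t : V → 𝔤𝔩(V)` is linear with values in `𝔤` and `(v,w) ↦ t(v)(w)` is
symmetric, then `t = 0`. -/
theorem chern_first_prolongation_vanishes (n : ℕ)
    (t : ((Fin 1 ⊕ (Fin n ⊕ Fin n)) → ℝ) →ₗ[ℝ]
        Module.End ℝ ((Fin 1 ⊕ (Fin n ⊕ Fin n)) → ℝ))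
    (hval : ∀ v, ∃ A : Matrix (Fin n) (Fin n) ℝ, t v = Matrix.toLin' (bd0 n A))
    (hsymm : ∀ v w, t v w = t w v) :
    t = 0 := by
  have h0 : ∀ v w (i : Fin 1), t v w (Sum.inl i) = 0 := by
    intro v w i
    obtain ⟨A, hA⟩ := hval v
    rw [hA]
    simp [toLin'_apply, mulVec, dotProduct, bd0, Fintype.sum_sum_type]
  have h1 : ∀ v w w' (i : Fin n),
      (∀ j, w (Sum.inr (Sum.inl j)) = w' (Sum.inr (Sum.inr j))) →
      t v w (Sum.inr (Sum.inl i)) = t v w' (Sum.inr (Sum.inr i)) := by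
    intro v w w' i h
    obtain ⟨A, hA⟩ := hval v
    rw [hA]
    simp only [toLin'_apply, mulVec, dotProduct, bd0, Fintype.sum_sum_type,
      fromBlocks_apply₂₁, fromBlocks_apply₂₂, fromBlocks_apply₁₁, fromBlocks_apply₁₂,
      Matrix.zero_apply, zero_mul, Finset.sum_const_zero, zero_add, add_zero]
    exact Finset.sum_congr rfl fun j _ => by rw [h j]
  have h2 : ∀ v w w' (i : Fin n),
      (∀ j, w (Sum.inr (Sum.inl j)) = w' (Sum.inr (Sum.inl j))) →
      t v w (Sum.inr (Sum.inl i)) = t v w' (Sum.inr (Sum.inl i)) := by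
    intro v w w' i h
    obtain ⟨A, hA⟩ := hval v
    rw [hA]
    simp only [toLin'_apply, mulVec, dotProduct, bd0, Fintype.sum_sum_type,
      fromBlocks_apply₂₁, fromBlocks_apply₂₂, fromBlocks_apply₁₁, fromBlocks_apply₁₂,
      Matrix.zero_apply, zero_mul, Finset.sum_const_zero, zero_add, add_zero]
    exact Finset.sum_congr rfl fun j _ => by rw [h j]
  have h3 : ∀ v w w' (i : Fin n),
      (∀ j, w (Sum.inr (Sum.inr j)) = w' (Sum.inr (Sum.inr j))) →
      t v w (Sum.inr (Sum.inr i)) = t v w' (Sum.inr (Sum.inr i)) := by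
    intro v w w' i h
    obtain ⟨A, hA⟩ := hval v
    rw [hA]
    simp only [toLin'_apply, mulVec, dotProduct, bd0, Fintype.sum_sum_type,
      fromBlocks_apply₂₁, fromBlocks_apply₂₂, fromBlocks_apply₁₁, fromBlocks_apply₁₂,
      Matrix.zero_apply, zero_mul, Finset.sum_const_zero, zero_add, add_zero]
    exact Finset.sum_congr rfl fun j _ => by rw [h j]
  -- injections into the two copies of ℝⁿ
  set ι₁ : (Fin n → ℝ) → ((Fin 1 ⊕ (Fin n ⊕ Fin n)) → ℝ) :=
    fun x => Sum.elim 0 (Sum.elim x 0) with hι₁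
  set ι₂ : (Fin n → ℝ) → ((Fin 1 ⊕ (Fin n ⊕ Fin n)) → ℝ) :=
    fun x => Sum.elim 0 (Sum.elim 0 x) with hι₂
  refine LinearMap.ext fun v => LinearMap.ext fun w => funext fun x => ?_
  show t v w x = 0
  have hz : ∀ x, (t v w) x = 0 := by
    intro x
    match x with
    | Sum.inl i => exact h0 v w i
    | Sum.inr (Sum.inl i) =>
      have w1 : Fin n → ℝ := fun j => w (Sum.inr (Sum.inl j))
      calc t v w (Sum.inr (Sum.inl i))
          = t v (ι₂ fun j => w (Sum.inr (Sum.inl j))) (Sum.inr (Sum.inr i)) :=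
            h1 v _ _ i (fun j => rfl)
        _ = t (ι₂ fun j => w (Sum.inr (Sum.inl j))) v (Sum.inr (Sum.inr i)) := by
            rw [hsymm]
        _ = t (ι₂ fun j => w (Sum.inr (Sum.inl j)))
              (ι₂ fun j => v (Sum.inr (Sum.inr j))) (Sum.inr (Sum.inr i)) :=
            h3 _ _ _ i (fun j => rfl)
        _ = t (ι₂ fun j => v (Sum.inr (Sum.inr j)))
              (ι₂ fun j => w (Sum.inr (Sum.inl j))) (Sum.inr (Sum.inr i)) := by
            rw [hsymm]
        _ = t (ι₂ fun j => v (Sum.inr (Sum.inr j)))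
              (ι₁ fun j => w (Sum.inr (Sum.inl j))) (Sum.inr (Sum.inl i)) :=
            (h1 _ _ _ i (fun j => rfl)).symm
        _ = t (ι₁ fun j => w (Sum.inr (Sum.inl j)))
              (ι₂ fun j => v (Sum.inr (Sum.inr j))) (Sum.inr (Sum.inl i)) := by
            rw [hsymm]
        _ = t (ι₁ fun j => w (Sum.inr (Sum.inl j))) 0 (Sum.inr (Sum.inl i)) :=
            h2 _ _ _ i (fun j => rfl)
        _ = 0 := by simp
    | Sum.inr (Sum.inr i) =>
      calc t v w (Sum.inr (Sum.inr i))
          = t v (ι₁ fun j => w (Sum.inr (Sum.inr j))) (Sum.inr (Sum.inl i)) :=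
            (h1 v _ _ i (fun j => rfl)).symm
        _ = t (ι₁ fun j => w (Sum.inr (Sum.inr j))) v (Sum.inr (Sum.inl i)) := by
            rw [hsymm]
        _ = t (ι₁ fun j => w (Sum.inr (Sum.inr j)))
              (ι₁ fun j => v (Sum.inr (Sum.inl j))) (Sum.inr (Sum.inl i)) :=
            h2 _ _ _ i (fun j => rfl)
        _ = t (ι₁ fun j => v (Sum.inr (Sum.inl j)))
              (ι₁ fun j => w (Sum.inr (Sum.inr j))) (Sum.inr (Sum.inl i)) := by
            rw [hsymm]
        _ = t (ι₁ fun j => v (Sum.inr (Sum.inl j)))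
              (ι₂ fun j => w (Sum.inr (Sum.inr j))) (Sum.inr (Sum.inr i)) :=
            h1 _ _ _ i (fun j => rfl)
        _ = t (ι₂ fun j => w (Sum.inr (Sum.inr j)))
              (ι₁ fun j => v (Sum.inr (Sum.inl j))) (Sum.inr (Sum.inr i)) := by
            rw [hsymm]
        _ = t (ι₂ fun j => w (Sum.inr (Sum.inr j))) 0 (Sum.inr (Sum.inr i)) :=
            h3 _ _ _ i (fun j => rfl)
        _ = 0 := by simp
  exact hz x
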